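/- Let a ∈ ℚ, a > 0, a ≠ 1, with a = a₀^h and a₀ = a₁·a₂² as in the context, let Γ = ⟨−1,a⟩ and let m ≥ 2 be even. Then: if v₂(m) = 1, tildeΓ(m) = {(ℚ*)²} when 2 ∣ h·a₁, and tildeΓ(m) = {(ℚ*)², ε·a₁·(ℚ*)²} when 2 ∤ h·a₁, where ε = +1 if a₁ ≡ 1 mod 4 and ε = −1 if a₁ ≡ 3 mod 4; if v₂(m) = 2, tildeΓ(m) = {(ℚ*)⁴} when 4 ∣ h, tildeΓ(m) = {(ℚ*)⁴, a₁²·(ℚ*)⁴} when 2 ∤ a₁ and 4 ∤ h, and tildeΓ(m) = {(ℚ*)⁴, −a₁²·(ℚ*)⁴} when 2 ∣ a₁ and 4 ∤ h; if α = v₂(m) ≥ 3, tildeΓ(m) = {(ℚ*)^{2^α}} when v₂(h) ≥ v₂(m), and tildeΓ(m) = {(ℚ*)^{2^α}, a₁^{2^{α−1}}·(ℚ*)^{2^α}} when v₂(h) < v₂(m). -/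

import Mathlib

/- Common definitions: finitely generated multiplicative subgroups `Γ ⊆ ℚˣ`,
the quotients `Γ(n) = Γ·(ℚ*)ⁿ/(ℚ*)ⁿ`, the invariants `δ(γ)`, the group `tildeΓ(m)`,
the constants `A(Γ,m)` and `B_{Γ,k}`, and the density `ρ(Γ,m)`. -/

open scoped Classical

noncomputable section

/-- The subgroup `(ℚˣ)ⁿ` of `n`-th powers in `ℚˣ`. -/
def powSubgroup (n : ℕ) : Subgroup ℚˣ := (powMonoidHom n : ℚˣ →* ℚˣ).range

/-- `Γ(n)`: the image of `Γ` in `ℚˣ/(ℚˣ)ⁿ`. -/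
def GammaMod (Γ : Subgroup ℚˣ) (n : ℕ) : Subgroup (ℚˣ ⧸ powSubgroup n) :=
  Γ.map (QuotientGroup.mk' (powSubgroup n))

/-- The unit of `ℚˣ` determined by a nonzero integer (junk value `1` at `0`). -/
def intUnit (b : ℤ) : ℚˣ := if h : (b : ℚ) = 0 then 1 else Units.mk0 (b : ℚ) h

/-- The unit of `ℚˣ` determined by a nonzero natural number. -/
def natUnit (b : ℕ) : ℚˣ := intUnit b

/-- A class modulo `n`-th powers contains a positive rational (for even `n` this says
that the class consists of positive rationals). -/
def IsPosClass (n : ℕ) (c : ℚˣ ⧸ powSubgroup n) : Prop :=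
  ∃ x : ℚˣ, QuotientGroup.mk x = c ∧ 0 < (x : ℚ)

/-- `δ(γ)` for a class `γ` modulo `(ℚˣ)ⁿ` (`n = 2^α`): if `γ = ±γ₀^(n/2)·(ℚˣ)ⁿ` with
`γ₀ > 1` squarefree, this is the discriminant of `ℚ(√γ₀)`, namely `γ₀` if `γ₀ ≡ 1 mod 4`
and `4γ₀` otherwise; the trivial class gets the value `1`. -/
def deltaClass (n : ℕ) (c : ℚˣ ⧸ powSubgroup n) : ℕ :=
  if c = 1 then 1
  else if h : ∃ g : ℕ, Squarefree g ∧ 1 < g ∧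
      ((QuotientGroup.mk (natUnit g ^ (n / 2)) : ℚˣ ⧸ powSubgroup n) = c ∨
       (QuotientGroup.mk (-(natUnit g ^ (n / 2))) : ℚˣ ⧸ powSubgroup n) = c)
  then (if h.choose % 4 = 1 then h.choose else 4 * h.choose)
  else 1

/-- The set `tildeΓ(m) ⊆ Γ(m₂)[2]`, where `m₂ = 2^(v₂(m))`. -/
def tildeGamma (Γ : Subgroup ℚˣ) (m : ℕ) :
    Set (ℚˣ ⧸ powSubgroup (2 ^ padicValNat 2 m)) :=
  {c | c ∈ GammaMod Γ (2 ^ padicValNat 2 m) ∧ c ^ 2 = 1 ∧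
    (if IsPosClass (2 ^ padicValNat 2 m) c
     then padicValNat 2 (deltaClass (2 ^ padicValNat 2 m) c) ≤ padicValNat 2 m
     else padicValNat 2 (deltaClass (2 ^ padicValNat 2 m) c) = padicValNat 2 m + 1)}

/-- `B_{Γ,k}`. -/
def BGamma (Γ : Subgroup ℚˣ) (k : ℕ) : ℝ :=
  ∑ᶠ c ∈ tildeGamma Γ k,
    ∏ᶠ ℓ ∈ {ℓ : ℕ | ℓ.Prime ∧ ℓ ∣ deltaClass (2 ^ padicValNat 2 k) c ∧ ¬ ℓ ∣ k},
      (-1 : ℝ) / (((ℓ : ℝ) - 1) * (Nat.card (GammaMod Γ ℓ)) - 1)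

/-- `A(Γ,m)`. -/
def AGamma (Γ : Subgroup ℚˣ) (m : ℕ) : ℝ :=
  (1 / ((Nat.totient m : ℝ) * (Nat.card (GammaMod Γ m) : ℝ))) *
  (∏ᶠ ℓ ∈ {ℓ : ℕ | ℓ.Prime ∧ ℓ ≠ 2 ∧ ℓ ∣ m},
      (1 - (Nat.card (GammaMod Γ (ℓ ^ padicValNat ℓ m)) : ℝ) /
        ((ℓ : ℝ) * (Nat.card (GammaMod Γ (ℓ ^ (padicValNat ℓ m + 1))) : ℝ)))) *
  (∏' ℓ : {ℓ : ℕ // ℓ.Prime ∧ ℓ ≠ 2 ∧ ¬ ℓ ∣ m},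
      (1 - 1 / ((((ℓ : ℕ) : ℝ) - 1) * (Nat.card (GammaMod Γ ((ℓ : ℕ))) : ℝ))))

/-- The set `{ζ_d} ∪ Γ^{1/d}` inside `ℂ`, where `Γ^{1/d}` is the set of real `d`-th
roots of elements of `Γ`. -/
def kummerSet (Γ : Subgroup ℚˣ) (d : ℕ) : Set ℂ :=
  {Complex.exp (2 * Real.pi * Complex.I / d)} ∪
  {z : ℂ | ∃ x : ℝ, (x : ℂ) = z ∧ ∃ γ ∈ Γ, x ^ d = ((γ : ℚ) : ℝ)}

/-- The degree `[ℚ(ζ_d, Γ^{1/d}) : ℚ]`. -/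
def kummerDegree (Γ : Subgroup ℚˣ) (d : ℕ) : ℕ :=
  Module.finrank ℚ (IntermediateField.adjoin ℚ (kummerSet Γ d))

/-- `ρ(Γ,m) = ∑_{k ≥ 1} μ(k)/[ℚ(ζ_{mk},Γ^{1/mk}):ℚ]`. -/
def rhoGamma (Γ : Subgroup ℚˣ) (m : ℕ) : ℝ :=
  ∑' k : ℕ, if k = 0 then 0 else
    (ArithmeticFunction.moebius k : ℝ) / (kummerDegree Γ (m * k) : ℝ)

/-- `Γ` has rank `r ≥ 1`: it contains an element of infinite order. -/
def HasPositiveRank (Γ : Subgroup ℚˣ) : Prop :=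
  ∃ g ∈ Γ, ∀ n : ℕ, 0 < n → g ^ n ≠ 1

/-- The discriminant of the quadratic field `ℚ(√g)`: writing `g = d·t²` with `d` a
squarefree integer, it is `d` if `d ≡ 1 mod 4` and `4d` otherwise (in particular it is
`1` if `g` is a square of a rational; junk value `0` at `g = 0`). -/
def quadDisc (g : ℚ) : ℤ :=
  if h : ∃ d : ℤ, Squarefree d ∧ ∃ t : ℚ, g = (d : ℚ) * t ^ 2
  then (if h.choose % 4 = 1 then h.choose else 4 * h.choose)
  else 0

/-- The support of `Γ`: primes occurring with nonzero valuation in some element of `Γ`. -/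
def suppGamma (Γ : Subgroup ℚˣ) : Set ℕ :=
  {ℓ : ℕ | ℓ.Prime ∧ ∃ γ ∈ Γ, padicValRat ℓ (γ : ℚ) ≠ 0}

/-- The reduction `Γ_p` of `Γ` modulo a prime `p` (not in the support of `Γ`),
as a subgroup of `(ZMod p)ˣ = 𝔽_pˣ`. -/
def reductionGamma (Γ : Subgroup ℚˣ) (p : ℕ) : Subgroup (ZMod p)ˣ :=
  Subgroup.closure
    {x : (ZMod p)ˣ | ∃ γ ∈ Γ,
      (x : ZMod p) = ((γ : ℚ).num : ZMod p) * (((γ : ℚ).den : ZMod p))⁻¹}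

/-- The `m`-th cyclotomic field `K_m = ℚ(ζ_m)` inside `ℂ`. -/
def cycloField (m : ℕ) : IntermediateField ℚ ℂ :=
  IntermediateField.adjoin ℚ {Complex.exp (2 * Real.pi * Complex.I / m)}

/-- `tildeΓ_{m,d} = (Γ·(ℚ*)^d ∩ (K_m^*)^d)/(ℚ*)^d`, as a subset of `ℚˣ/(ℚˣ)^d`. -/
def tildeGammaMD (Γ : Subgroup ℚˣ) (m d : ℕ) : Set (ℚˣ ⧸ powSubgroup d) :=
  {c | ∃ x : ℚˣ, QuotientGroup.mk x = c ∧ (∃ γ ∈ Γ, ∃ y : ℚˣ, x = γ * y ^ d) ∧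
    ∃ z ∈ cycloField m, z ^ d = ((x : ℚ) : ℂ)}

/-- The Artin constant `A = ∏_ℓ (1 - 1/(ℓ² - ℓ))`. -/
def artinConst : ℝ :=
  ∏' ℓ : {ℓ : ℕ // ℓ.Prime}, (1 - 1 / (((ℓ : ℕ) : ℝ) ^ 2 - ((ℓ : ℕ) : ℝ)))

/-- The subgroup `⟨-1, a⟩` of `ℚˣ` generated by `-1` and a rational `a`. -/
def negOneAGroup (a : ℚ) : Subgroup ℚˣ :=
  Subgroup.closure {u : ℚˣ | (u : ℚ) = -1 ∨ (u : ℚ) = a}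

/-- `τ_{a,m}` (depending only on `h`, `m` and `a₁`). -/
def tau (h m a₁ : ℕ) : ℝ :=
  if padicValNat 2 m < padicValNat 2 h then 0
  else if padicValNat 2 h = padicValNat 2 m ∧ padicValNat 2 m = 0 ∧ 2 ∣ h * a₁ then 0
  else if (padicValNat 2 h = 0 ∧ padicValNat 2 m = 0 ∧ ¬ 2 ∣ h * a₁) ∨
      (padicValNat 2 h = padicValNat 2 m ∧ 0 < padicValNat 2 m) ∨
      (padicValNat 2 h < padicValNat 2 m ∧ padicValNat 2 m = 1 ∧ 2 ∣ h * a₁) then -1/3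
  else 1

end

/-! Since `a₀ > 0` is not a perfect power, its class has order exactly `2^α` in
`ℚˣ/(ℚˣ)^(2^α)`, and `-1` only contributes a sign. Hence `Γ(2^α)[2]` consists of `±1` and,
precisely when `2^α ∤ h`, of `±a₁^(2^(α-1))`, because `a₀^(2^(α-1)) ≡ a₁^(2^(α-1))`.
A squarefree `g` is determined by the class of `±g^(2^(α-1))`, so `δ` is `1` on `±1` and the
discriminant of `ℚ(√a₁)` on the other two classes; its 2-adic valuation is `0`, `2` or `3`
according as `a₁ ≡ 1 mod 4`, `a₁ ≡ 3 mod 4` or `a₁` is even, and comparing it with `α`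
gives the seven cases. -/

open QuotientGroup

theorem Rat.units_neg_one_ne_one : (-1 : ℚˣ) ≠ 1 := fun h => by
  norm_num [Units.ext_iff] at h

namespace powSubgroup

variable {n : ℕ}

theorem mk_eq_one_iff {x : ℚˣ} : (mk x : ℚˣ ⧸ powSubgroup n) = 1 ↔ ∃ y : ℚˣ, y ^ n = x :=
  QuotientGroup.eq_one_iff x

theorem mk_eq_mk_iff {x y : ℚˣ} :
    (mk x : ℚˣ ⧸ powSubgroup n) = mk y ↔ ∃ t : ℚˣ, (y : ℚ) = x * (t : ℚ) ^ n := by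
  rw [QuotientGroup.eq]
  change (∃ t, t ^ n = x⁻¹ * y) ↔ _
  simp only [eq_inv_mul_iff_mul_eq, Units.ext_iff, Units.val_mul, Units.val_pow_eq_pow_val,
    eq_comm]

theorem pos_iff_of_mk_eq (hn : Even n) {x y : ℚˣ} (hxy : (mk x : ℚˣ ⧸ powSubgroup n) = mk y) :
    0 < (x : ℚ) ↔ 0 < (y : ℚ) := by
  obtain ⟨t, ht⟩ := mk_eq_mk_iff.mp hxy
  rw [ht, mul_pos_iff_of_pos_right (hn.pow_pos t.ne_zero)]

theorem isPosClass_mk (hn : Even n) (x : ℚˣ) : IsPosClass n (mk x) ↔ 0 < (x : ℚ) :=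
  ⟨fun ⟨_, hx, hpos⟩ => (pos_iff_of_mk_eq hn hx).mp hpos, fun hx => ⟨x, rfl, hx⟩⟩

theorem orderOf_mk {u : ℚˣ} (hu : 0 < (u : ℚ))
    (hnp : ∀ (b : ℚ) (k : ℕ), 2 ≤ k → (u : ℚ) ≠ b ^ k) (hn : n ≠ 0) :
    orderOf (mk u : ℚˣ ⧸ powSubgroup n) = n := by
  set d := orderOf (mk u : ℚˣ ⧸ powSubgroup n)
  obtain ⟨k, hk⟩ : d ∣ n := orderOf_dvd_of_pow_eq_one <| by
    rw [← QuotientGroup.mk_pow, mk_eq_one_iff]; exact ⟨u, rfl⟩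
  obtain ⟨y, hy⟩ := mk_eq_one_iff.mp <|
    (QuotientGroup.mk_pow _ u d).symm.trans (pow_orderOf_eq_one (mk u : ℚˣ ⧸ powSubgroup n))
  have hd : d ≠ 0 := by rintro hd; rw [hd, zero_mul] at hk; exact hn hk
  have hroot : |(y : ℚ)| ^ k = u := by
    refine (pow_left_inj₀ (by positivity) hu.le hd).mp ?_
    rw [← pow_mul, mul_comm, ← hk, ← abs_pow, ← Units.val_pow_eq_pow_val, hy,
      Units.val_pow_eq_pow_val, abs_of_pos (pow_pos hu d)]
  have hk1 : k = 1 := by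
    by_contra hk1
    have hk0 : k ≠ 0 := by rintro rfl; exact hn (by rw [hk, mul_zero])
    exact hnp _ k (by omega) hroot.symm
  rw [hk, hk1, mul_one]

end powSubgroup

section CyclicTwoGroup

variable {G : Type*} [Group G] {x y : G} {k : ℕ}

theorem sq_eq_one_iff_of_mem_zpowers (hx : orderOf x = 2 ^ (k + 1))
    (hy : y ∈ Subgroup.zpowers x) : y ^ 2 = 1 ↔ y = 1 ∨ y = x ^ 2 ^ k := by
  obtain ⟨z, rfl⟩ := Subgroup.mem_zpowers_iff.mp hy
  rw [← zpow_natCast, ← zpow_mul, ← zpow_natCast x (2 ^ k), ← zpow_zero x,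
    zpow_eq_zpow_iff_modEq, zpow_eq_zpow_iff_modEq, zpow_eq_zpow_iff_modEq, hx]
  simp only [Int.modEq_iff_dvd, zero_sub, dvd_neg]
  push_cast
  rw [pow_succ]
  constructor
  · intro hdvd
    obtain ⟨w, rfl⟩ : (2 : ℤ) ^ k ∣ z := (mul_dvd_mul_iff_right two_ne_zero).mp hdvd
    rcases Int.even_or_odd' w with ⟨j, rfl | rfl⟩
    · exact Or.inl ⟨j, by ring⟩
    · exact Or.inr ⟨-j, by ring⟩
  · rintro (⟨j, hj⟩ | ⟨j, hj⟩)
    · exact ⟨2 * j, by rw [hj]; ring⟩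
    · exact ⟨1 - 2 * j, by linear_combination (-2) * hj⟩

theorem pow_two_pow_mem_zpowers_pow_iff (hx : orderOf x = 2 ^ (k + 1)) (h : ℕ) :
    x ^ 2 ^ k ∈ Subgroup.zpowers (x ^ h) ↔ ¬ 2 ^ (k + 1) ∣ h := by
  constructor
  · intro hmem hdvd
    rw [orderOf_dvd_iff_pow_eq_one.mp (hx ▸ hdvd), Subgroup.zpowers_one_eq_bot,
      Subgroup.mem_bot] at hmem
    exact pow_ne_one_of_lt_orderOf (by positivity) (hx ▸ Nat.pow_lt_pow_succ one_lt_two) hmem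
  · intro hndvd
    have hsq : (x ^ 2 ^ k) ^ 2 = 1 := by rw [← pow_mul, ← pow_succ, ← hx, pow_orderOf_eq_one]
    obtain ⟨β, o, ho, rfl⟩ := Nat.exists_eq_two_pow_mul_odd (n := h) (by rintro rfl; simp at hndvd)
    have hβ : β ≤ k := by
      by_contra! hβ
      exact hndvd (Dvd.dvd.mul_right (pow_dvd_pow 2 hβ) o)
    have hodd : (x ^ 2 ^ k) ^ o = x ^ 2 ^ k := by
      obtain ⟨j, rfl⟩ := ho
      rw [pow_succ, pow_mul, hsq, one_pow, one_mul]
    have hpow : (x ^ (2 ^ β * o)) ^ 2 ^ (k - β) = x ^ 2 ^ k := by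
      rw [← pow_mul, mul_right_comm, ← pow_add, Nat.add_sub_cancel' hβ, pow_mul, hodd]
    exact hpow ▸ Subgroup.pow_mem _ (Subgroup.mem_zpowers _) _

theorem mem_zpowers_pow_and_sq_eq_one_iff (hx : orderOf x = 2 ^ (k + 1)) (h : ℕ) :
    y ∈ Subgroup.zpowers (x ^ h) ∧ y ^ 2 = 1 ↔ y = 1 ∨ ¬ 2 ^ (k + 1) ∣ h ∧ y = x ^ 2 ^ k := by
  constructor
  · rintro ⟨hy, hsq⟩
    have hy' : y ∈ Subgroup.zpowers x :=
      Subgroup.zpowers_le.mpr (Subgroup.pow_mem _ (Subgroup.mem_zpowers x) h) hy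
    rcases (sq_eq_one_iff_of_mem_zpowers hx hy').mp hsq with rfl | rfl
    · exact Or.inl rfl
    · exact Or.inr ⟨(pow_two_pow_mem_zpowers_pow_iff hx h).mp hy, rfl⟩
  · rintro (rfl | ⟨hh, rfl⟩)
    · exact ⟨one_mem _, one_pow 2⟩
    · exact ⟨(pow_two_pow_mem_zpowers_pow_iff hx h).mpr hh,
        by rw [← pow_mul, ← pow_succ, ← hx, pow_orderOf_eq_one]⟩

end CyclicTwoGroup

theorem natUnit_val {g : ℕ} (hg : g ≠ 0) : (natUnit g : ℚ) = g := by
  simp [natUnit, intUnit, hg]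

theorem natUnit_one : natUnit 1 = 1 := Units.ext (natUnit_val one_ne_zero)

theorem negOneAGroup_eq_closure (u : ℚˣ) : negOneAGroup u = Subgroup.closure {-1, u} := by
  unfold negOneAGroup
  congr 1
  ext v
  simp only [Set.mem_ofPred_eq, Set.mem_insert_iff, Set.mem_singleton_iff]
  rw [Units.ext_iff, Units.ext_iff, Units.val_neg, Units.val_one]

theorem mem_gammaMod_negOneAGroup_iff {n : ℕ} (u : ℚˣ) {c : ℚˣ ⧸ powSubgroup n} :
    c ∈ GammaMod (negOneAGroup u) n ↔
      ∃ y ∈ Subgroup.zpowers (mk u : ℚˣ ⧸ powSubgroup n), c = y ∨ c = mk (-1) * y := by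
  rw [GammaMod, negOneAGroup_eq_closure, MonoidHom.map_closure, Set.image_pair,
    Subgroup.mem_closure_pair]
  constructor
  · rintro ⟨i, j, rfl⟩
    refine ⟨_, Subgroup.zpow_mem_zpowers _ j, ?_⟩
    rcases Int.even_or_odd i with hi | hi <;> rw [← map_zpow, hi.neg_one_zpow] <;> simp
  · rintro ⟨y, ⟨j, rfl⟩, rfl | rfl⟩
    · exact ⟨0, j, by simp⟩
    · exact ⟨1, j, by simp⟩

theorem mem_gammaMod_negOneAGroup_and_sq_eq_one_iff {α h a₁ : ℕ} (hα : α ≠ 0) {u₀ u₂ : ℚˣ}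
    (hx : orderOf (mk u₀ : ℚˣ ⧸ powSubgroup (2 ^ α)) = 2 ^ α)
    (hu₀ : u₀ = natUnit a₁ * u₂ ^ 2) (c : ℚˣ ⧸ powSubgroup (2 ^ α)) :
    c ∈ GammaMod (negOneAGroup (u₀ ^ h : ℚˣ)) (2 ^ α) ∧ c ^ 2 = 1 ↔
      ∃ ε g, (ε = 1 ∨ ε = -1) ∧ (g = 1 ∨ ¬ 2 ^ α ∣ h ∧ g = a₁) ∧
        c = mk (ε * natUnit g ^ 2 ^ (α - 1)) := by
  obtain ⟨k, rfl⟩ := Nat.exists_eq_add_one_of_ne_zero hα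
  rw [Nat.add_sub_cancel]
  have hs : (mk u₀ : ℚˣ ⧸ powSubgroup (2 ^ (k + 1))) ^ 2 ^ k = mk (natUnit a₁ ^ 2 ^ k) := by
    rw [← QuotientGroup.mk_pow, hu₀, mul_pow, ← pow_mul, ← pow_succ', QuotientGroup.mk_mul,
      powSubgroup.mk_eq_one_iff.mpr ⟨u₂, rfl⟩, mul_one]
  have hsign (y : ℚˣ ⧸ powSubgroup (2 ^ (k + 1))) : (mk (-1) * y) ^ 2 = y ^ 2 := by
    rw [mul_pow, ← QuotientGroup.mk_pow, neg_one_sq, QuotientGroup.mk_one, one_mul]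
  rw [mem_gammaMod_negOneAGroup_iff, QuotientGroup.mk_pow]
  constructor
  · rintro ⟨⟨y, hy, hcy⟩, hc⟩
    have hy2 : y ^ 2 = 1 := by rcases hcy with rfl | rfl; exacts [hc, hsign y ▸ hc]
    rcases (mem_zpowers_pow_and_sq_eq_one_iff hx h).mp ⟨hy, hy2⟩ with rfl | ⟨hh, rfl⟩
    · rcases hcy with rfl | rfl
      · exact ⟨1, 1, Or.inl rfl, Or.inl rfl, by simp [natUnit_one]⟩
      · exact ⟨-1, 1, Or.inr rfl, Or.inl rfl, by simp [natUnit_one]⟩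
    · rw [hs] at hcy
      rcases hcy with rfl | rfl
      · exact ⟨1, a₁, Or.inl rfl, Or.inr ⟨hh, rfl⟩, by rw [one_mul]⟩
      · exact ⟨-1, a₁, Or.inr rfl, Or.inr ⟨hh, rfl⟩, by rw [QuotientGroup.mk_mul]⟩
  · rintro ⟨ε, g, hε, hg, rfl⟩
    have hy := (mem_zpowers_pow_and_sq_eq_one_iff hx h (y := mk (natUnit g ^ 2 ^ k))).mpr <|
      hg.imp (fun hg1 => by rw [hg1, natUnit_one, one_pow, QuotientGroup.mk_one])
        (fun ⟨hh, hga⟩ => ⟨hh, by rw [hga, hs]⟩)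
    rcases hε with rfl | rfl
    · exact ⟨⟨_, hy.1, Or.inl (by rw [one_mul])⟩, by rw [one_mul]; exact hy.2⟩
    · exact ⟨⟨_, hy.1, Or.inr (by rw [QuotientGroup.mk_mul])⟩,
        by rw [QuotientGroup.mk_mul, hsign, hy.2]⟩

theorem Squarefree.eq_of_natCast_eq_mul_sq {g g' : ℕ} (hg : Squarefree g) (hg' : Squarefree g')
    {t : ℚ} (h : (g' : ℚ) = g * t ^ 2) : g' = g := by
  obtain ⟨s, hs⟩ : IsSquare (g * g') :=
    Rat.isSquare_natCast_iff.mp ⟨g * t, by push_cast; rw [h]; ring⟩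
  obtain ⟨r, rfl⟩ : g ∣ s := (hg.dvd_pow_iff_dvd two_ne_zero).mp ⟨g', by rw [sq, ← hs]⟩
  have hgr : g' = r * r * g :=
    Nat.eq_of_mul_eq_mul_left (Nat.pos_of_ne_zero hg.ne_zero) (by rw [hs]; ring)
  rw [hgr, Nat.isUnit_iff.mp (hg' r ⟨g, hgr⟩), one_mul, one_mul]

theorem eq_of_mk_sign_mul_pow_eq {N g g' : ℕ} (hN : N ≠ 0) (hg : Squarefree g)
    (hg' : Squarefree g') {ε ε' : ℚˣ} (hε : ε = 1 ∨ ε = -1) (hε' : ε' = 1 ∨ ε' = -1)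
    (h : (mk (ε * natUnit g ^ N) : ℚˣ ⧸ powSubgroup (2 * N)) = mk (ε' * natUnit g' ^ N)) :
    g' = g := by
  obtain ⟨t, ht⟩ := powSubgroup.mk_eq_mk_iff.mp h
  have habs : (g' : ℚ) ^ N = (g * |(t : ℚ)| ^ 2) ^ N := by
    have := congrArg abs ht
    have hsign : ∀ e : ℚˣ, (e = 1 ∨ e = -1) → |(e : ℚ)| = 1 := by
      rintro e (rfl | rfl) <;> simp
    simp only [Units.val_mul, Units.val_pow_eq_pow_val, natUnit_val hg.ne_zero,
      natUnit_val hg'.ne_zero, abs_mul, abs_pow, Nat.abs_cast, hsign ε hε, hsign ε' hε',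
      one_mul] at this
    rw [this, mul_pow, ← pow_mul]
  exact hg.eq_of_natCast_eq_mul_sq hg' ((pow_left_inj₀ (by positivity) (by positivity) hN).mp habs)

def sqfreeDisc (g : ℕ) : ℕ := if g % 4 = 1 then g else 4 * g

theorem deltaClass_mk_sign_mul_pow {n N g : ℕ} (hn : n = 2 * N) (hN : N ≠ 0)
    (hg : Squarefree g) {ε : ℚˣ} (hε : ε = 1 ∨ ε = -1) :
    deltaClass n (mk (ε * natUnit g ^ N)) = sqfreeDisc g := by
  subst hn
  have huniq {g' : ℕ} {ε' : ℚˣ} (hg' : Squarefree g') (hε' : ε' = 1 ∨ ε' = -1)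
      (h : (mk (ε * natUnit g ^ N) : ℚˣ ⧸ powSubgroup (2 * N)) = mk (ε' * natUnit g' ^ N)) :
      g' = g :=
    eq_of_mk_sign_mul_pow_eq hN hg hg' hε hε' h
  rw [deltaClass, Nat.mul_div_cancel_left N two_pos]
  by_cases h1 : (mk (ε * natUnit g ^ N) : ℚˣ ⧸ powSubgroup (2 * N)) = 1
  · rw [if_pos h1, ← huniq squarefree_one (Or.inl rfl) (by rw [h1, natUnit_one]; simp)]
    rfl
  rw [if_neg h1]
  by_cases hex : ∃ g' : ℕ, Squarefree g' ∧ 1 < g' ∧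
      ((mk (natUnit g' ^ N) : ℚˣ ⧸ powSubgroup (2 * N)) = mk (ε * natUnit g ^ N) ∨
       (mk (-(natUnit g' ^ N)) : ℚˣ ⧸ powSubgroup (2 * N)) = mk (ε * natUnit g ^ N))
  · rw [dif_pos hex]
    obtain ⟨hg', -, hcls | hcls⟩ := hex.choose_spec
    · rw [huniq hg' (Or.inl rfl) (by rw [one_mul, hcls])]
      rfl
    · rw [huniq hg' (Or.inr rfl) (by rw [neg_one_mul, hcls])]
      rfl
  rw [dif_neg hex]
  obtain rfl : g = 1 := by
    by_contra hg1
    refine hex ⟨g, hg, by have := hg.ne_zero; omega, ?_⟩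
    rcases hε with rfl | rfl
    · exact Or.inl (by rw [one_mul])
    · exact Or.inr (by rw [neg_one_mul])
  rfl

theorem isPosClass_mk_sign_mul_pow {n N g : ℕ} (hn : Even n) (hg : g ≠ 0) {ε : ℚˣ}
    (hε : ε = 1 ∨ ε = -1) : IsPosClass n (mk (ε * natUnit g ^ N)) ↔ ε = 1 := by
  rw [powSubgroup.isPosClass_mk hn]
  rcases hε with rfl | rfl
  · rw [one_mul, Units.val_pow_eq_pow_val, natUnit_val hg]
    exact iff_of_true (by positivity) rfl
  · rw [neg_one_mul, Units.val_neg, Units.val_pow_eq_pow_val, natUnit_val hg]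
    exact iff_of_false (by simp only [Left.neg_pos_iff, not_lt]; positivity)
      Rat.units_neg_one_ne_one

theorem padicValNat_two_sqfreeDisc {g : ℕ} (hg : Squarefree g) :
    padicValNat 2 (sqfreeDisc g) = if g % 4 = 1 then 0 else if 2 ∣ g then 3 else 2 := by
  have h4 : padicValNat 2 4 = 2 := padicValNat.prime_pow (p := 2) 2
  unfold sqfreeDisc
  split_ifs with h1 h2
  · exact padicValNat.eq_zero_of_not_dvd (by omega)
  · obtain ⟨g', rfl⟩ := h2
    have hg' : ¬ 2 ∣ g' := fun ⟨r, hr⟩ =>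
      absurd (hg 2 ⟨r, by rw [hr]; ring⟩) (by decide)
    rw [padicValNat.mul (by norm_num) (by omega), padicValNat.mul (by norm_num) (by omega), h4,
      padicValNat.self one_lt_two, padicValNat.eq_zero_of_not_dvd hg']
  · rw [padicValNat.mul (by norm_num) (by omega), h4, padicValNat.eq_zero_of_not_dvd h2]

theorem mem_tildeGamma_negOneAGroup_iff {a a₀ a₂ : ℚ} {h a₁ m : ℕ} (ha₀ : 0 < a₀)
    (hnp : ∀ (b : ℚ) (k : ℕ), 2 ≤ k → a₀ ≠ b ^ k) (hah : a = a₀ ^ h)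
    (ha₁ : Squarefree a₁) (ha₂ : a₂ ≠ 0) (hdec : a₀ = a₁ * a₂ ^ 2)
    (hm : padicValNat 2 m ≠ 0) (c : ℚˣ ⧸ powSubgroup (2 ^ padicValNat 2 m)) :
    c ∈ tildeGamma (negOneAGroup a) m ↔ c = 1 ∨ ¬ 2 ^ padicValNat 2 m ∣ h ∧
      (padicValNat 2 (sqfreeDisc a₁) ≤ padicValNat 2 m ∧
          c = mk (natUnit a₁ ^ 2 ^ (padicValNat 2 m - 1)) ∨
        padicValNat 2 (sqfreeDisc a₁) = padicValNat 2 m + 1 ∧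
          c = mk (-(natUnit a₁ ^ 2 ^ (padicValNat 2 m - 1)))) := by
  set u₀ : ℚˣ := Units.mk0 a₀ ha₀.ne'
  have hu₀ : u₀ = natUnit a₁ * Units.mk0 a₂ ha₂ ^ 2 :=
    Units.ext (by simp [u₀, natUnit_val ha₁.ne_zero, hdec])
  obtain rfl : a = (u₀ ^ h : ℚˣ) := by simp [u₀, hah]
  simp only [tildeGamma, Set.mem_ofPred_eq, ← and_assoc]
  rw [mem_gammaMod_negOneAGroup_and_sq_eq_one_iff hm
    (powSubgroup.orderOf_mk ha₀ hnp (by positivity)) hu₀]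
  set α := padicValNat 2 m
  have hcond {ε : ℚˣ} {g : ℕ} (hε : ε = 1 ∨ ε = -1) (hg : Squarefree g) :
      (if IsPosClass (2 ^ α) (mk (ε * natUnit g ^ 2 ^ (α - 1)))
        then padicValNat 2 (deltaClass (2 ^ α) (mk (ε * natUnit g ^ 2 ^ (α - 1)))) ≤ α
        else padicValNat 2 (deltaClass (2 ^ α) (mk (ε * natUnit g ^ 2 ^ (α - 1)))) = α + 1) ↔
      if ε = 1 then padicValNat 2 (sqfreeDisc g) ≤ α
        else padicValNat 2 (sqfreeDisc g) = α + 1 := by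
    rw [deltaClass_mk_sign_mul_pow (mul_pow_sub_one hm 2).symm (by positivity) hg hε,
      if_congr (isPosClass_mk_sign_mul_pow (by simp [Nat.even_pow, hm]) hg.ne_zero hε) rfl rfl]
  have hsf {g : ℕ} (hg : g = 1 ∨ ¬ 2 ^ α ∣ h ∧ g = a₁) : Squarefree g :=
    hg.elim (· ▸ squarefree_one) (·.2 ▸ ha₁)
  constructor
  · rintro ⟨⟨ε, g, hε, hg, rfl⟩, hc⟩
    rw [hcond hε (hsf hg)] at hc
    rcases hε with rfl | rfl <;> rcases hg with rfl | ⟨hh, rfl⟩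
    · exact Or.inl (by rw [natUnit_one, one_pow, one_mul, QuotientGroup.mk_one])
    · exact Or.inr ⟨hh, Or.inl ⟨by rwa [if_pos rfl] at hc, by rw [one_mul]⟩⟩
    · rw [if_neg Rat.units_neg_one_ne_one] at hc
      exact absurd hc (by simp [sqfreeDisc])
    · exact Or.inr ⟨hh, Or.inr ⟨by rwa [if_neg Rat.units_neg_one_ne_one] at hc,
        by rw [neg_one_mul]⟩⟩
  · rintro (rfl | ⟨hh, ⟨hv, rfl⟩ | ⟨hv, rfl⟩⟩)
    · rw [show (1 : ℚˣ ⧸ powSubgroup (2 ^ α)) = mk (1 * natUnit 1 ^ 2 ^ (α - 1)) by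
        rw [natUnit_one, one_pow, one_mul, QuotientGroup.mk_one]]
      exact ⟨⟨1, 1, Or.inl rfl, Or.inl rfl, rfl⟩,
        (hcond (Or.inl rfl) squarefree_one).mpr (by simp [sqfreeDisc])⟩
    · rw [← one_mul (natUnit a₁ ^ _)]
      exact ⟨⟨1, a₁, Or.inl rfl, Or.inr ⟨hh, rfl⟩, rfl⟩,
        (hcond (Or.inl rfl) ha₁).mpr (by rwa [if_pos rfl])⟩
    · rw [← neg_one_mul (natUnit a₁ ^ _)]
      exact ⟨⟨-1, a₁, Or.inr rfl, Or.inr ⟨hh, rfl⟩, rfl⟩,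
        (hcond (Or.inr rfl) ha₁).mpr (by rwa [if_neg Rat.units_neg_one_ne_one])⟩

theorem tildeGamma_negOneAGroup_eq_one {a a₀ a₂ : ℚ} {h a₁ m : ℕ} (ha₀ : 0 < a₀)
    (hnp : ∀ (b : ℚ) (k : ℕ), 2 ≤ k → a₀ ≠ b ^ k) (hah : a = a₀ ^ h)
    (ha₁ : Squarefree a₁) (ha₂ : a₂ ≠ 0) (hdec : a₀ = a₁ * a₂ ^ 2)
    (hm : padicValNat 2 m ≠ 0)
    (hcase : 2 ^ padicValNat 2 m ∣ h ∨ padicValNat 2 m + 1 < padicValNat 2 (sqfreeDisc a₁)) :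
    tildeGamma (negOneAGroup a) m = {1} := by
  ext c
  rw [mem_tildeGamma_negOneAGroup_iff ha₀ hnp hah ha₁ ha₂ hdec hm, Set.mem_singleton_iff]
  constructor
  · rintro (hc | ⟨hh, ⟨hV, -⟩ | ⟨hV, -⟩⟩)
    · exact hc
    all_goals omega
  · exact Or.inl

theorem tildeGamma_negOneAGroup_eq_pair_pos {a a₀ a₂ : ℚ} {h a₁ m : ℕ} (ha₀ : 0 < a₀)
    (hnp : ∀ (b : ℚ) (k : ℕ), 2 ≤ k → a₀ ≠ b ^ k) (hah : a = a₀ ^ h)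
    (ha₁ : Squarefree a₁) (ha₂ : a₂ ≠ 0) (hdec : a₀ = a₁ * a₂ ^ 2)
    (hm : padicValNat 2 m ≠ 0) (hh : ¬ 2 ^ padicValNat 2 m ∣ h)
    (hV : padicValNat 2 (sqfreeDisc a₁) ≤ padicValNat 2 m) :
    tildeGamma (negOneAGroup a) m = {1, mk (natUnit a₁ ^ 2 ^ (padicValNat 2 m - 1))} := by
  ext c
  rw [mem_tildeGamma_negOneAGroup_iff ha₀ hnp hah ha₁ ha₂ hdec hm]
  simp only [Set.mem_insert_iff, Set.mem_singleton_iff, hh, hV, not_false_eq_true, true_and,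
    show padicValNat 2 (sqfreeDisc a₁) ≠ padicValNat 2 m + 1 by omega, false_and, or_false]

theorem tildeGamma_negOneAGroup_eq_pair_neg {a a₀ a₂ : ℚ} {h a₁ m : ℕ} (ha₀ : 0 < a₀)
    (hnp : ∀ (b : ℚ) (k : ℕ), 2 ≤ k → a₀ ≠ b ^ k) (hah : a = a₀ ^ h)
    (ha₁ : Squarefree a₁) (ha₂ : a₂ ≠ 0) (hdec : a₀ = a₁ * a₂ ^ 2)
    (hm : padicValNat 2 m ≠ 0) (hh : ¬ 2 ^ padicValNat 2 m ∣ h)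
    (hV : padicValNat 2 (sqfreeDisc a₁) = padicValNat 2 m + 1) :
    tildeGamma (negOneAGroup a) m = {1, mk (-(natUnit a₁ ^ 2 ^ (padicValNat 2 m - 1)))} := by
  ext c
  rw [mem_tildeGamma_negOneAGroup_iff ha₀ hnp hah ha₁ ha₂ hdec hm]
  simp only [Set.mem_insert_iff, Set.mem_singleton_iff, hh, hV, not_false_eq_true, true_and,
    show ¬ padicValNat 2 m + 1 ≤ padicValNat 2 m by omega, false_and, false_or]

theorem tildeGamma_negOneA_general (a a₀ a₂ : ℚ) (h a₁ m : ℕ)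
    (ha₀pos : 0 < a₀)
    (hnp : ∀ (b : ℚ) (k : ℕ), 2 ≤ k → a₀ ≠ b ^ k)
    (hh : 1 ≤ h) (hah : a = a₀ ^ h)
    (ha₁sf : Squarefree a₁) (ha₂pos : 0 < a₂)
    (hdec : a₀ = (a₁ : ℚ) * a₂ ^ 2) :
    (padicValNat 2 m = 1 ∧ 2 ∣ h * a₁ →
      tildeGamma (negOneAGroup a) m = {1}) ∧
    (padicValNat 2 m = 1 ∧ ¬ 2 ∣ h * a₁ →
      tildeGamma (negOneAGroup a) m =
        {1, QuotientGroup.mk ((if a₁ % 4 = 1 then 1 else -1) * natUnit a₁)}) ∧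
    (padicValNat 2 m = 2 ∧ 4 ∣ h →
      tildeGamma (negOneAGroup a) m = {1}) ∧
    (padicValNat 2 m = 2 ∧ ¬ 2 ∣ a₁ ∧ ¬ 4 ∣ h →
      tildeGamma (negOneAGroup a) m = {1, QuotientGroup.mk (natUnit a₁ ^ 2)}) ∧
    (padicValNat 2 m = 2 ∧ 2 ∣ a₁ ∧ ¬ 4 ∣ h →
      tildeGamma (negOneAGroup a) m = {1, QuotientGroup.mk (-(natUnit a₁ ^ 2))}) ∧
    (3 ≤ padicValNat 2 m ∧ padicValNat 2 m ≤ padicValNat 2 h →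
      tildeGamma (negOneAGroup a) m = {1}) ∧
    (3 ≤ padicValNat 2 m ∧ padicValNat 2 h < padicValNat 2 m →
      tildeGamma (negOneAGroup a) m =
        {1, QuotientGroup.mk (natUnit a₁ ^ 2 ^ (padicValNat 2 m - 1))}) := by
  have hV := padicValNat_two_sqfreeDisc ha₁sf
  have one := tildeGamma_negOneAGroup_eq_one (m := m) ha₀pos hnp hah ha₁sf ha₂pos.ne' hdec
  have pos := tildeGamma_negOneAGroup_eq_pair_pos (m := m) ha₀pos hnp hah ha₁sf ha₂pos.ne' hdec
  have neg := tildeGamma_negOneAGroup_eq_pair_neg (m := m) ha₀pos hnp hah ha₁sf ha₂pos.ne' hdec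
  refine ⟨?_, ?_, ?_, ?_, ?_, ?_, ?_⟩
  · rintro ⟨hv, hha⟩
    refine one (by omega) ?_
    rw [hv, pow_one, hV]
    rcases Nat.prime_two.dvd_mul.mp hha with h2 | h2
    exacts [Or.inl h2, Or.inr (by split_ifs <;> omega)]
  · rintro ⟨hv, hha⟩
    obtain ⟨h2h, h2a⟩ := not_or.mp (mt Nat.prime_two.dvd_mul.mpr hha)
    have hh' : ¬ 2 ^ padicValNat 2 m ∣ h := by rwa [hv, pow_one]
    rw [show natUnit a₁ = natUnit a₁ ^ 2 ^ (padicValNat 2 m - 1) by rw [hv, pow_zero, pow_one]]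
    split_ifs with h4
    · rw [one_mul]
      exact pos (by omega) hh' (by rw [hV, if_pos h4]; omega)
    · rw [neg_one_mul]
      exact neg (by omega) hh' (by rw [hV, hv, if_neg h4, if_neg h2a])
  · rintro ⟨hv, h4⟩
    exact one (by omega) (Or.inl (by rwa [hv]))
  · rintro ⟨hv, h2a, h4⟩
    rw [show natUnit a₁ ^ 2 = natUnit a₁ ^ 2 ^ (padicValNat 2 m - 1) by rw [hv]; rfl]
    exact pos (by omega) (by rwa [hv]) (by rw [hV, hv]; split_ifs <;> omega)
  · rintro ⟨hv, h2a, h4⟩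
    rw [show natUnit a₁ ^ 2 = natUnit a₁ ^ 2 ^ (padicValNat 2 m - 1) by rw [hv]; rfl]
    exact neg (by omega) (by rwa [hv]) (by rw [hV, hv]; split_ifs <;> omega)
  · rintro ⟨hv, hvh⟩
    exact one (by omega) (Or.inl ((pow_dvd_pow 2 hvh).trans pow_padicValNat_dvd))
  · rintro ⟨hv, hvh⟩
    refine pos (by omega) (fun hd => ?_) (by rw [hV]; split_ifs <;> omega)
    exact absurd ((padicValNat_dvd_iff_le (by omega)).mp hd) (by omega)

/-- **`tildeΓ(m)` for `Γ = ⟨−1,a⟩` and even `m`**, according to `v₂(m)`. -/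
theorem tildeGamma_negOneA (a a₀ a₂ : ℚ) (h a₁ m : ℕ)
    (ha : 0 < a) (ha1 : a ≠ 1) (ha₀pos : 0 < a₀)
    (hnp : ∀ (b : ℚ) (k : ℕ), 2 ≤ k → a₀ ≠ b ^ k)
    (hh : 1 ≤ h) (hah : a = a₀ ^ h)
    (ha₁sf : Squarefree a₁) (ha₁1 : 1 < a₁) (ha₂pos : 0 < a₂)
    (hdec : a₀ = (a₁ : ℚ) * a₂ ^ 2) (hm : 2 ≤ m) (heven : 2 ∣ m) :
    (padicValNat 2 m = 1 ∧ 2 ∣ h * a₁ →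
      tildeGamma (negOneAGroup a) m = {1}) ∧
    (padicValNat 2 m = 1 ∧ ¬ 2 ∣ h * a₁ →
      tildeGamma (negOneAGroup a) m =
        {1, QuotientGroup.mk ((if a₁ % 4 = 1 then 1 else -1) * natUnit a₁)}) ∧
    (padicValNat 2 m = 2 ∧ 4 ∣ h →
      tildeGamma (negOneAGroup a) m = {1}) ∧
    (padicValNat 2 m = 2 ∧ ¬ 2 ∣ a₁ ∧ ¬ 4 ∣ h →
      tildeGamma (negOneAGroup a) m = {1, QuotientGroup.mk (natUnit a₁ ^ 2)}) ∧
    (padicValNat 2 m = 2 ∧ 2 ∣ a₁ ∧ ¬ 4 ∣ h →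
      tildeGamma (negOneAGroup a) m = {1, QuotientGroup.mk (-(natUnit a₁ ^ 2))}) ∧
    (3 ≤ padicValNat 2 m ∧ padicValNat 2 m ≤ padicValNat 2 h →
      tildeGamma (negOneAGroup a) m = {1}) ∧
    (3 ≤ padicValNat 2 m ∧ padicValNat 2 h < padicValNat 2 m →
      tildeGamma (negOneAGroup a) m =
        {1, QuotientGroup.mk (natUnit a₁ ^ 2 ^ (padicValNat 2 m - 1))}) :=
  tildeGamma_negOneA_general a a₀ a₂ h a₁ m ha₀pos hnp hh hah ha₁sf ha₂pos hdec
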